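/- arXiv:2103.12282 — 4 statements merged into one kernel-verified Lean document; each statement's English description precedes it below -/
import Mathlib

section
/- Let A be a d×d real matrix and for each natural number k define the d×d matrix B_k = exp(A) · ∫₀¹ (τ − 1/2)ᵏ · exp(−τ·A) dτ. Then for every k ≥ 1, A·B_k = k·B_{k−1} + (−1/2)ᵏ · (exp(A) − (−1)ᵏ·I). -/
/-!
Integrating `d/dτ [(τ - 1/2)^(k+1) exp(-τA)]
  = (k+1) (τ - 1/2)^k exp(-τA) - A (τ - 1/2)^(k+1) exp(-τA)` over `[0, 1]` gives
`A ∫₀¹ (τ - 1/2)^(k+1) exp(-τA) dτ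
  = (k+1) ∫₀¹ (τ - 1/2)^k exp(-τA) dτ - (1/2)^(k+1) exp(-A) + (-1/2)^(k+1)`;
multiplying by `exp A`, which commutes with `A` and inverts `exp(-A)`, yields the recurrence.
This works in any real Banach algebra; for matrices the entrywise integrals are the entries of the
Bochner integral.
-/

open NormedSpace intervalIntegral

section ExpIntegral

variable {𝔸 : Type*} [NormedRing 𝔸] [NormedAlgebra ℝ 𝔸] [CompleteSpace 𝔸]

theorem hasDerivAt_sub_pow_succ_smul_exp_smul (X : 𝔸) (c : ℝ) (k : ℕ) (τ : ℝ) :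
    HasDerivAt (fun t : ℝ => (t - c) ^ (k + 1) • exp (t • X))
      ((τ - c) ^ (k + 1) • (X * exp (τ • X)) + ((k + 1 : ℝ) * (τ - c) ^ k) • exp (τ • X)) τ := by
  have hpow : HasDerivAt (fun t : ℝ => (t - c) ^ (k + 1)) ((k + 1 : ℝ) * (τ - c) ^ k) τ := by
    simpa using ((hasDerivAt_id τ).sub_const c).fun_pow (k + 1)
  exact hpow.smul (hasDerivAt_exp_smul_const' X τ)

theorem mul_integral_sub_pow_succ_smul_exp_smul (X : 𝔸) (a b c : ℝ) (k : ℕ) :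
    X * ∫ τ in a..b, (τ - c) ^ (k + 1) • exp (τ • X) =
      (b - c) ^ (k + 1) • exp (b • X) - (a - c) ^ (k + 1) • exp (a • X)
        - (k + 1 : ℝ) • ∫ τ in a..b, (τ - c) ^ k • exp (τ • X) := by
  have hexp : Continuous fun t : ℝ => exp (t • X) := (differentiable_exp_smul_const ℝ X).continuous
  have hint₁ : IntervalIntegrable (fun t : ℝ => (t - c) ^ (k + 1) • (X * exp (t • X)))
      MeasureTheory.volume a b :=
    (by fun_prop : Continuous _).intervalIntegrable a b
  have hint₂ : IntervalIntegrable (fun t : ℝ => ((k + 1 : ℝ) * (t - c) ^ k) • exp (t • X))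
      MeasureTheory.volume a b :=
    (by fun_prop : Continuous _).intervalIntegrable a b
  have hmul : ∫ τ in a..b, (τ - c) ^ (k + 1) • (X * exp (τ • X)) =
      X * ∫ τ in a..b, (τ - c) ^ (k + 1) • exp (τ • X) := by
    simp only [← mul_smul_comm]
    exact (ContinuousLinearMap.mul ℝ 𝔸 X).intervalIntegral_comp_comm
      ((by fun_prop : Continuous _).intervalIntegrable a b)
  have hftc := integral_eq_sub_of_hasDerivAt
    (fun τ _ => hasDerivAt_sub_pow_succ_smul_exp_smul X c k τ) (hint₁.add hint₂)
  rw [integral_add hint₁ hint₂, hmul] at hftc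
  simp only [mul_smul, integral_smul] at hftc
  rw [← hftc]
  abel

theorem NormedSpace.exp_mul_exp_neg (A : 𝔸) : exp A * exp (-A) = 1 := by
  let : NormedAlgebra ℚ 𝔸 := NormedAlgebra.restrictScalars ℚ ℝ 𝔸
  rw [← NormedSpace.exp_add_of_commute (Commute.refl A).neg_right, add_neg_cancel, exp_zero]

noncomputable def centeredExpMoment (A : 𝔸) (k : ℕ) : 𝔸 :=
  exp A * ∫ τ in (0 : ℝ)..1, (τ - 1 / 2) ^ k • exp (-(τ • A))

theorem mul_centeredExpMoment_succ (A : 𝔸) (k : ℕ) :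
    A * centeredExpMoment A (k + 1) = (k + 1 : ℝ) • centeredExpMoment A k +
      (-(1 : ℝ) / 2) ^ (k + 1) • (exp A - (-1 : ℝ) ^ (k + 1) • 1) := by
  have hibp := mul_integral_sub_pow_succ_smul_exp_smul (-A) 0 1 (1 / 2) k
  have hsign : (-(1 : ℝ) / 2) ^ (k + 1) * (-1 : ℝ) ^ (k + 1) = (1 / 2) ^ (k + 1) := by
    rw [← mul_pow]
    norm_num
  simp only [centeredExpMoment, ← smul_neg]
  rw [← mul_assoc, (Commute.refl A).exp_right.eq, mul_assoc, ← neg_neg A, neg_mul, neg_neg, hibp]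
  simp only [one_smul, zero_smul, exp_zero, mul_neg, mul_sub, mul_smul_comm, exp_mul_exp_neg,
    mul_one, smul_sub, smul_smul, hsign]
  norm_num
  module

end ExpIntegral

section MatrixIntegral

attribute [local instance] Matrix.linftyOpNormedRing Matrix.linftyOpNormedAlgebra

theorem Matrix.of_intervalIntegral_apply {n : Type*} [Fintype n] [DecidableEq n]
    {f : ℝ → Matrix n n ℝ} (hf : Continuous f) (a b : ℝ) :
    Matrix.of (fun i j => ∫ τ in a..b, f τ i j) = ∫ τ in a..b, f τ := by
  ext i j
  exact (Matrix.entryLinearMap ℝ ℝ i j).toContinuousLinearMap.intervalIntegral_comp_comm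
    (hf.intervalIntegrable (μ := MeasureTheory.volume) a b)

end MatrixIntegral

/-- Recurrence relation for the matrices
`B_k = exp(A) ∫₀¹ (τ − 1/2)ᵏ exp(−τ A) dτ` (entrywise integrals):
for `k ≥ 1`, `A B_k = k B_{k−1} + (−1/2)ᵏ (exp(A) − (−1)ᵏ I)`. -/
theorem matrix_Bk_recurrence
    (d : ℕ) (A : Matrix (Fin d) (Fin d) ℝ)
    (B : ℕ → Matrix (Fin d) (Fin d) ℝ)
    (hB : ∀ k : ℕ, B k = NormedSpace.exp A *
      Matrix.of (fun i j =>
        ∫ τ in (0:ℝ)..1, (τ - 1/2) ^ k * (NormedSpace.exp (-(τ • A))) i j)) :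
    ∀ k : ℕ, 1 ≤ k →
      A * B k = (k : ℝ) • B (k - 1) +
        ((-(1:ℝ)/2) ^ k) • (NormedSpace.exp A - ((-1:ℝ) ^ k) • (1 : Matrix (Fin d) (Fin d) ℝ)) := by
  let : NormedRing (Matrix (Fin d) (Fin d) ℝ) := Matrix.linftyOpNormedRing
  let : NormedAlgebra ℝ (Matrix (Fin d) (Fin d) ℝ) := Matrix.linftyOpNormedAlgebra
  have hB_eq (k : ℕ) : B k = centeredExpMoment A k := by
    rw [hB k, centeredExpMoment, ← Matrix.of_intervalIntegral_apply]
    · rfl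
    · simp only [← smul_neg]
      exact ((continuous_sub_right _).pow k).smul (differentiable_exp_smul_const ℝ (-A)).continuous
  intro k hk
  obtain ⟨m, rfl⟩ := Nat.exists_eq_add_of_le' hk
  rw [hB_eq, hB_eq, Nat.add_sub_cancel, Nat.cast_succ]
  exact mul_centeredExpMoment_succ A m
end

section
/- Fix a natural number M ≥ 1 and define the polynomials P_M(x) = ∑_{m=0}^{M} ((2M−m)!/(m!·(M−m)!))·xᵐ and Q_M(x) = P_M(−x). Then the function f : ℝ → ℝ given by f(x) = eˣ·Q_M(x) − P_M(x) has vanishing derivatives at 0 up to order 2M; that is, the k-th iterated derivative of f at 0 equals 0 for every k with 0 ≤ k ≤ 2M. Consequently, the diagonal Padé approximant P_M(x)/Q_M(x) agrees with eˣ to order 2M at x = 0. -/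
/-!
By Leibniz' rule the `k`-th derivative of `eˣ Q_M(x)` at `0` is `∑ᵢ C(k, i) Q_M⁽ᵏ⁻ⁱ⁾(0)`, and
`Q_M⁽ʲ⁾(0) = (-1)ʲ P_M⁽ʲ⁾(0)` with `P_M⁽ʲ⁾(0) = j! · (2M-j)! / (j! (M-j)!) = M! · C(2M-j, M)` for
`j ≤ 2M`. The claim thus becomes `Δᵏ C(·, M) (2M-k) = C(2M-k, M)` for the forward difference `Δ`,
which is iterated Pascal's rule: `Δᵏ C(·, M) = C(·, M-k)` for `k ≤ M` and `= 0` for `k > M`.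
-/

open Finset Nat Real

theorem iteratedDeriv_sum_mul_pow_zero {𝕜 : Type*} [NontriviallyNormedField 𝕜]
    (a : ℕ → 𝕜) (s : Finset ℕ) (k : ℕ) :
    iteratedDeriv k (fun x ↦ ∑ m ∈ s, a m * x ^ m) 0 = if k ∈ s then k ! * a k else 0 := by
  rw [iteratedDeriv_fun_sum fun m _ ↦ by fun_prop]
  simp only [iteratedDeriv_const_mul_field, iteratedDeriv_fun_pow_zero]
  simp [mul_comm]

theorem iteratedDeriv_exp_mul_zero {g : ℝ → ℝ} {k : ℕ} (hg : ContDiffAt ℝ k g 0) :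
    iteratedDeriv k (fun x ↦ exp x * g x) 0 =
      ∑ i ∈ range (k + 1), k.choose i * iteratedDeriv (k - i) g 0 := by
  rw [iteratedDeriv_fun_mul (by fun_prop) hg]
  simp [iteratedDeriv_eq_iterate, iter_deriv_exp]

theorem fwdDiff_iter_choose_apply (M k y : ℕ) :
    (fwdDiff 1)^[k] (fun x ↦ x.choose M : ℕ → ℤ) y =
      if k ≤ M then (y.choose (M - k) : ℤ) else 0 := by
  split_ifs with hk
  · obtain ⟨j, rfl⟩ := Nat.exists_eq_add_of_le hk
    rw [Nat.add_sub_cancel_left, fwdDiff_iter_choose]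
  · obtain ⟨r, rfl⟩ := Nat.exists_eq_add_of_lt (not_le.mp hk)
    have hconst := fwdDiff_iter_choose 0 M
    rw [add_zero] at hconst
    rw [show M + r + 1 = r + 1 + M by ring, Function.iterate_add_apply, hconst,
      Function.iterate_succ_apply]
    simp only [choose_zero_right, cast_one, fwdDiff_const]
    rw [Function.iterate_fixed (fwdDiff_const (M := ℕ) 1 (0 : ℤ))]

theorem sum_neg_one_pow_mul_choose_mul_choose_add (M k y : ℕ) :
    ∑ i ∈ range (k + 1), (-1 : ℤ) ^ (k - i) * k.choose i * (y + i).choose M =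
      if k ≤ M then (y.choose (M - k) : ℤ) else 0 := by
  rw [← fwdDiff_iter_choose_apply, fwdDiff_iter_eq_sum_shift]
  simp

theorem sum_neg_one_pow_mul_choose_mul_choose_two_mul_sub {M k : ℕ} (hk : k ≤ 2 * M) :
    ∑ i ∈ range (k + 1), (-1 : ℤ) ^ (k - i) * k.choose i * (2 * M - k + i).choose M =
      (2 * M - k).choose M := by
  rw [sum_neg_one_pow_mul_choose_mul_choose_add]
  split_ifs with hkM
  · rw [choose_symm_of_eq_add (show 2 * M - k = M - k + M by omega)]
  · rw [choose_eq_zero_of_lt (by omega), cast_zero]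

noncomputable def padeNumerator (M : ℕ) (x : ℝ) : ℝ :=
  ∑ m ∈ range (M + 1), (((2 * M - m)! : ℝ) / ((m ! : ℝ) * ((M - m)! : ℝ))) * x ^ m

theorem iteratedDeriv_padeNumerator_zero {M j : ℕ} (hj : j ≤ 2 * M) :
    iteratedDeriv j (padeNumerator M) 0 = M ! * (2 * M - j).choose M := by
  unfold padeNumerator
  rw [iteratedDeriv_sum_mul_pow_zero]
  split_ifs with hjM <;> rw [mem_range] at hjM
  · rw [cast_choose ℝ (by omega : M ≤ 2 * M - j), show 2 * M - j - M = M - j by omega]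
    field_simp
  · rw [choose_eq_zero_of_lt (by omega)]
    simp

@[fun_prop]
theorem contDiff_padeNumerator (M : ℕ) {n : WithTop ℕ∞} : ContDiff ℝ n (padeNumerator M) := by
  unfold padeNumerator
  fun_prop

theorem pade_exponential_order_general
    (M : ℕ)
    (P Q f : ℝ → ℝ)
    (hP : ∀ x : ℝ, P x = ∑ m ∈ Finset.range (M + 1),
      (((2 * M - m).factorial : ℝ) / ((m.factorial : ℝ) * ((M - m).factorial : ℝ))) * x ^ m)
    (hQ : ∀ x : ℝ, Q x = P (-x))
    (hf : ∀ x : ℝ, f x = Real.exp x * Q x - P x) :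
    ∀ k : ℕ, k ≤ 2 * M → iteratedDeriv k f 0 = 0 := by
  intro k hk
  have hP' : P = padeNumerator M := funext hP
  have hf' : f = fun x ↦ exp x * padeNumerator M (-x) - padeNumerator M x :=
    funext fun x ↦ by rw [hf, hQ, hP']
  have hsum := congrArg (Int.cast : ℤ → ℝ) (sum_neg_one_pow_mul_choose_mul_choose_two_mul_sub hk)
  push_cast at hsum
  rw [hf', iteratedDeriv_fun_sub (by fun_prop) (by fun_prop),
    iteratedDeriv_exp_mul_zero (by fun_prop), iteratedDeriv_padeNumerator_zero hk, ← hsum, mul_sum,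
    sub_eq_zero]
  refine sum_congr rfl fun i hi ↦ ?_
  rw [iteratedDeriv_comp_neg, neg_zero, smul_eq_mul, iteratedDeriv_padeNumerator_zero (by omega),
    show 2 * M - (k - i) = 2 * M - k + i by rw [mem_range] at hi; omega]
  ring

/-- The diagonal Padé approximant of order `M` of the exponential function
agrees with `eˣ` to order `2M` at `x = 0`: the function
`f(x) = eˣ Q_M(x) − P_M(x)` has vanishing iterated derivatives at `0` up to
order `2M`, where `P_M(x) = ∑ₘ ((2M−m)!/(m!(M−m)!)) xᵐ` and `Q_M(x) = P_M(−x)`. -/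
theorem pade_exponential_order
    (M : ℕ) (hM : 1 ≤ M)
    (P Q f : ℝ → ℝ)
    (hP : ∀ x : ℝ, P x = ∑ m ∈ Finset.range (M + 1),
      (((2 * M - m).factorial : ℝ) / ((m.factorial : ℝ) * ((M - m).factorial : ℝ))) * x ^ m)
    (hQ : ∀ x : ℝ, Q x = P (-x))
    (hf : ∀ x : ℝ, f x = Real.exp x * Q x - P x) :
    ∀ k : ℕ, k ≤ 2 * M → iteratedDeriv k f 0 = 0 :=
  pade_exponential_order_general M P Q f hP hQ hf
end

section
/- Let A be an n×n real matrix (regarded as a complex matrix with real entries), let g ∈ ℝⁿ (regarded as a complex vector with real entries), and let r ∈ ℂ with Im(r) ≠ 0. Suppose y ∈ ℂⁿ satisfies (r·I − A)·y = g. Define the real vector x ∈ ℝⁿ by x = −Im(y)/Im(r), where Im(y) is the entrywise imaginary part of y. Then (r·I − A)(r̄·I − A)·x = g, where r̄ is the complex conjugate of r. -/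
/-!
Put `M = r I − A` and `N = r̄ I − A`. Since `A` and `g` are real, conjugating `M y = g` gives
`N ȳ = g`. The matrices `M` and `N` commute, so `M N (ȳ − y) = M g − N g = (r − r̄) g`,
while `ȳ − y = (r − r̄) x`. Dividing by `r − r̄ = 2 i Im r ≠ 0` gives `M N x = g`.
-/

open Matrix Complex

namespace Matrix

variable {ι R : Type*} [Fintype ι] [DecidableEq ι] [CommRing R]

theorem sub_smul_one_mul_mulVec_sub {B : Matrix ι ι R} {r s : R} {u v g : ι → R}
    (hu : (r • 1 - B) *ᵥ u = g) (hv : (s • 1 - B) *ᵥ v = g) :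
    ((r • 1 - B) * (s • 1 - B)) *ᵥ (v - u) = (r - s) • g := by
  have hcomm : Commute (r • 1 - B) (s • 1 - B) :=
    ((Commute.one_left _).smul_left r).sub_left
      (((Commute.one_left B).smul_left s).symm.sub_right (Commute.refl B))
  calc ((r • 1 - B) * (s • 1 - B)) *ᵥ (v - u)
      = (r • 1 - B) *ᵥ ((s • 1 - B) *ᵥ v) - (s • 1 - B) *ᵥ ((r • 1 - B) *ᵥ u) := by
        rw [mulVec_sub, mulVec_mulVec, mulVec_mulVec, hcomm.eq]
    _ = (r - s) • g := by
        rw [hu, hv, ← sub_mulVec, sub_sub_sub_cancel_right, ← sub_smul, smul_mulVec,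
          one_mulVec]

end Matrix

theorem conj_smul_one_sub_map_ofReal_mulVec_star {ι : Type*} [Fintype ι] [DecidableEq ι]
    (A : Matrix ι ι ℝ) (r : ℂ) (y : ι → ℂ) :
    (starRingEnd ℂ r • 1 - A.map ofReal) *ᵥ star y = star ((r • 1 - A.map ofReal) *ᵥ y) := by
  ext i
  rw [Pi.star_apply, star_def, RingHom.map_mulVec]
  congr 1
  ext j k
  simp [Matrix.one_apply, apply_ite (starRingEnd ℂ)]

theorem ofReal_neg_im_div_im (z r : ℂ) (hr : r.im ≠ 0) :
    ((-z.im / r.im : ℝ) : ℂ) = (r - starRingEnd ℂ r)⁻¹ * (starRingEnd ℂ z - z) := by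
  rw [← neg_sub z, sub_conj, sub_conj]
  have : (r.im : ℂ) ≠ 0 := ofReal_ne_zero.mpr hr
  push_cast
  field_simp

/-- If `(r I − A) y = g` with `A`, `g` real and `Im r ≠ 0`, then the real vector
`x = −Im(y)/Im(r)` solves `(r I − A)(r̄ I − A) x = g`. -/
theorem complex_root_real_solution
    (n : ℕ) (A : Matrix (Fin n) (Fin n) ℝ) (g : Fin n → ℝ)
    (r : ℂ) (hr : r.im ≠ 0)
    (y : Fin n → ℂ)
    (hy : (r • (1 : Matrix (Fin n) (Fin n) ℂ) - A.map (Complex.ofReal)).mulVec y =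
      fun i => ((g i : ℂ)))
    (x : Fin n → ℝ) (hx : x = fun i => -(y i).im / r.im) :
    ((r • (1 : Matrix (Fin n) (Fin n) ℂ) - A.map (Complex.ofReal)) *
        ((starRingEnd ℂ r) • (1 : Matrix (Fin n) (Fin n) ℂ) - A.map (Complex.ofReal))).mulVec
        (fun i => ((x i : ℂ))) = fun i => ((g i : ℂ)) := by
  have hconj : ((starRingEnd ℂ r) • 1 - A.map ofReal) *ᵥ star y = fun i => (g i : ℂ) := by
    rw [conj_smul_one_sub_map_ofReal_mulVec_star, hy]
    ext i
    simp
  have hx' : (fun i => (x i : ℂ)) = (r - starRingEnd ℂ r)⁻¹ • (star y - y) := by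
    ext i
    simp [hx, ofReal_neg_im_div_im _ _ hr]
  have hr' : r - starRingEnd ℂ r ≠ 0 := by
    rw [sub_conj]
    exact mul_ne_zero (ofReal_ne_zero.mpr (mul_ne_zero two_ne_zero hr)) I_ne_zero
  rw [hx', mulVec_smul, sub_smul_one_mul_mulVec_sub hy hconj, smul_smul,
    inv_mul_cancel₀ hr', one_smul]
end

section
/- Let n be a positive integer, let M, C, K be n×n real matrices with M invertible, let Δt be a real number, and let f_m ∈ ℝⁿ. Let A be the 2n×2n block matrix A = [[−Δt·M⁻¹C, −Δt²·M⁻¹K], [I, 0]], and for vectors u₀, u₁, v₀, v₁ ∈ ℝⁿ set z₀ = (v₀, u₀), z₁ = (v₁, u₁), and F = (Δt²·M⁻¹·f_m, 0). Then the order-1 diagonal Padé time-stepping equation (2·I − A)·(z₁ + z₀) = 4·z₀ + 2·F holds if and only if both of the following hold: (4·M + 2·Δt·C + Δt²·K)·(v₁ + v₀) = 4·Δt²·f_m + 8·M·v₀ − 4·Δt²·K·u₀, and u₁ = u₀ + (1/2)·(v₁ + v₀). In other words, the order-1 Padé scheme coincides with Newmark's constant average acceleration (trapezoidal) update. -/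
/-!
The second block row of `(2I - A)(z₁ + z₀) = 4z₀ + 2F` reads `2(u₁ + u₀) - (v₁ + v₀) = 4u₀`, which
is the trapezoidal displacement update. Substituting it into the first block row and premultiplying
by `2M` clears `M⁻¹` and yields the velocity equation; since `M` is invertible, this step is
reversible.
-/

open Matrix

theorem Sum.smul_elim {α β R γ : Type*} [SMul R γ] (c : R) (a : α → γ) (b : β → γ) :
    c • Sum.elim a b = Sum.elim (c • a) (c • b) := by
  ext (i | i) <;> rfl

theorem Matrix.smul_one_sub_fromBlocks_neg_neg_one_zero_mulVec {m R : Type*} [Fintype m]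
    [DecidableEq m] [CommRing R] (c : R) (P Q : Matrix m m R) (x y : m → R) :
    (c • (1 : Matrix (m ⊕ m) (m ⊕ m) R) - fromBlocks (-P) (-Q) 1 0) *ᵥ Sum.elim x y =
      Sum.elim (c • x + P *ᵥ x + Q *ᵥ y) (c • y - x) := by
  rw [sub_mulVec, smul_mulVec, one_mulVec, fromBlocks_mulVec, Sum.elim_comp_inl, Sum.elim_comp_inr,
    Sum.smul_elim, ← Sum.elim_sub_sub, neg_mulVec, neg_mulVec, one_mulVec, zero_mulVec, add_zero]
  congr 1
  abel

theorem Matrix.mulVec_nonsing_inv_mulVec {m R : Type*} [Fintype m] [DecidableEq m] [CommRing R]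
    {M : Matrix m m R} (hM : IsUnit M.det) (x : m → R) : M *ᵥ (M⁻¹ *ᵥ x) = x := by
  rw [mulVec_mulVec, mul_nonsing_inv M hM, one_mulVec]

theorem pade_order_one_is_trapezoidal_general
    (n : ℕ)
    (M C K : Matrix (Fin n) (Fin n) ℝ) (hM : IsUnit M.det)
    (Δt : ℝ) (f_m : Fin n → ℝ)
    (A : Matrix (Fin n ⊕ Fin n) (Fin n ⊕ Fin n) ℝ)
    (hA : A = Matrix.fromBlocks (-(Δt • (M⁻¹ * C))) (-(Δt ^ 2 • (M⁻¹ * K))) 1 0)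
    (u₀ u₁ v₀ v₁ : Fin n → ℝ)
    (z₀ z₁ F : Fin n ⊕ Fin n → ℝ)
    (hz₀ : z₀ = Sum.elim v₀ u₀) (hz₁ : z₁ = Sum.elim v₁ u₁)
    (hF : F = Sum.elim (Δt ^ 2 • (M⁻¹.mulVec f_m)) 0) :
    ((2 : ℝ) • (1 : Matrix (Fin n ⊕ Fin n) (Fin n ⊕ Fin n) ℝ) - A).mulVec (z₁ + z₀) =
        (4 : ℝ) • z₀ + (2 : ℝ) • F
      ↔
    (((4 : ℝ) • M + (2 * Δt) • C + Δt ^ 2 • K).mulVec (v₁ + v₀) =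
        (4 * Δt ^ 2) • f_m + (8 : ℝ) • M.mulVec v₀ - (4 * Δt ^ 2) • K.mulVec u₀ ∧
      u₁ = u₀ + (1/2 : ℝ) • (v₁ + v₀)) := by
  subst hA hz₀ hz₁ hF
  rw [← Sum.elim_add_add, smul_one_sub_fromBlocks_neg_neg_one_zero_mulVec, Sum.smul_elim,
    Sum.smul_elim, ← Sum.elim_add_add, smul_zero, add_zero, Sum.elim_eq_iff]
  have displacement :
      (2 : ℝ) • (u₁ + u₀) - (v₁ + v₀) = (4 : ℝ) • u₀ ↔ u₁ = u₀ + (1 / 2 : ℝ) • (v₁ + v₀) :=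
    ⟨fun h ↦ by linear_combination (norm := module) (1 / 2 : ℝ) • h,
      fun h ↦ by linear_combination (norm := module) (2 : ℝ) • h⟩
  rw [displacement, and_congr_left_iff]
  rintro rfl
  rw [← (mulVec_injective_of_isUnit ((isUnit_iff_isUnit_det M).2 hM)).eq_iff]
  simp only [mulVec_add, mulVec_smul, mulVec_mulVec, add_mulVec, smul_mulVec,
    mul_nonsing_inv_cancel_left M _ hM, mulVec_nonsing_inv_mulVec hM]
  constructor <;> intro velocity
  · linear_combination (norm := module) (2 : ℝ) • velocity
  · linear_combination (norm := module) (1 / 2 : ℝ) • velocity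

/-- The order-1 diagonal Padé time-stepping equation
`(2I − A)(z₁ + z₀) = 4 z₀ + 2 F`, with
`A = [[−Δt M⁻¹C, −Δt² M⁻¹K], [I, 0]]`, `zⱼ = (vⱼ, uⱼ)` and
`F = (Δt² M⁻¹ f_m, 0)`, is equivalent to Newmark's constant average
acceleration (trapezoidal) update. -/
theorem pade_order_one_is_trapezoidal
    (n : ℕ) (hn : 0 < n)
    (M C K : Matrix (Fin n) (Fin n) ℝ) (hM : IsUnit M.det)
    (Δt : ℝ) (f_m : Fin n → ℝ)
    (A : Matrix (Fin n ⊕ Fin n) (Fin n ⊕ Fin n) ℝ)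
    (hA : A = Matrix.fromBlocks (-(Δt • (M⁻¹ * C))) (-(Δt ^ 2 • (M⁻¹ * K))) 1 0)
    (u₀ u₁ v₀ v₁ : Fin n → ℝ)
    (z₀ z₁ F : Fin n ⊕ Fin n → ℝ)
    (hz₀ : z₀ = Sum.elim v₀ u₀) (hz₁ : z₁ = Sum.elim v₁ u₁)
    (hF : F = Sum.elim (Δt ^ 2 • (M⁻¹.mulVec f_m)) 0) :
    ((2 : ℝ) • (1 : Matrix (Fin n ⊕ Fin n) (Fin n ⊕ Fin n) ℝ) - A).mulVec (z₁ + z₀) =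
        (4 : ℝ) • z₀ + (2 : ℝ) • F
      ↔
    (((4 : ℝ) • M + (2 * Δt) • C + Δt ^ 2 • K).mulVec (v₁ + v₀) =
        (4 * Δt ^ 2) • f_m + (8 : ℝ) • M.mulVec v₀ - (4 * Δt ^ 2) • K.mulVec u₀ ∧
      u₁ = u₀ + (1/2 : ℝ) • (v₁ + v₀)) :=
  pade_order_one_is_trapezoidal_general n M C K hM Δt f_m A hA u₀ u₁ v₀ v₁ z₀ z₁ F hz₀ hz₁ hF
end
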